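/- Let H be a Hermitian d×d matrix with spectral projections P_E, let ρ be a d×d density matrix (positive semidefinite with trace 1), let ψ ∈ ℂ^d be a unit vector, and set q_E = ‖P_E ψ‖² and ρ_{E,E'} = P_E ρ P_{E'}. Then for every quantum channel ℳ(σ) = ∑_k M_k σ M_k† whose Kraus operators all commute with H, the fidelity satisfies ⟨ψ| ℳ(ρ) |ψ⟩ ≤ ∑_{E,E'} √(q_E q_{E'}) · ‖ρ_{E,E'}‖₁, where the sums run over the eigenvalues of H and ‖X‖₁ = Tr[√(X†X)] is the trace norm. -/

import Mathlib

open Matrix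
open scoped ComplexOrder

/-- `wt P v = ‖P v‖²`, the weight of the vector `v` on the range of `P`. -/
noncomputable def wt {d : ℕ} (P : Matrix (Fin d) (Fin d) ℂ) (v : Fin d → ℂ) : ℝ :=
  (star (P *ᵥ v) ⬝ᵥ (P *ᵥ v)).re

/-- The trace norm `‖X‖₁ = Tr[√(Xᴴ X)]`. -/
noncomputable def traceNorm {d : ℕ} (X : Matrix (Fin d) (Fin d) ℂ) : ℝ :=
  ((((Matrix.posSemidef_conjTranspose_mul_self X).1.eigenvectorUnitary : Matrix (Fin d) (Fin d) ℂ) *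
      diagonal ((RCLike.ofReal : ℝ → ℂ) ∘ Real.sqrt ∘ (Matrix.posSemidef_conjTranspose_mul_self X).1.eigenvalues) *
      (star (Matrix.posSemidef_conjTranspose_mul_self X).1.eigenvectorUnitary :
        Matrix (Fin d) (Fin d) ℂ)).trace).re

/-!
Since the energies are distinct, a Kraus operator commuting with `H` commutes with every spectral
projection, so `⟨ψ|ℳ(ρ)|ψ⟩` splits into the terms `⟨P_E ψ|ℳ(ρ_{E,E'})|P_{E'} ψ⟩`. For any matrix
`X` and an orthonormal eigenbasis `w` of `Xᴴ X` we have `X = ∑ᵢ |X wᵢ⟩⟨wᵢ|` and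
`‖X‖₁ = ∑ᵢ ‖X wᵢ‖`. As `∑ M_kᴴ M_k = 1`, the map `y ↦ (M_k y)_k` is an isometry, so by
Cauchy–Schwarz each rank-one piece contributes at most `‖u‖ ‖v‖ ‖X wᵢ‖` to
`|⟨u|ℳ(X)|v⟩|`.
-/

open scoped InnerProductSpace

section SpectralProjections

variable {R A ι : Type*} [Field R] [Ring A] [Algebra R A] [Fintype ι] {P : ι → A}

theorem mul_sum_smul_of_orthogonal (hIdem : ∀ i, P i * P i = P i)
    (hOrth : ∀ i j, i ≠ j → P i * P j = 0) (E : ι → R) (j : ι) :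
    P j * ∑ i, E i • P i = E j • P j := by
  rw [Finset.mul_sum, Finset.sum_eq_single j
    (fun i _ hij => by rw [mul_smul_comm, hOrth j i hij.symm, smul_zero]) (by simp),
    mul_smul_comm, hIdem]

theorem sum_smul_mul_of_orthogonal (hIdem : ∀ i, P i * P i = P i)
    (hOrth : ∀ i j, i ≠ j → P i * P j = 0) (E : ι → R) (j : ι) :
    (∑ i, E i • P i) * P j = E j • P j := by
  rw [Finset.sum_mul, Finset.sum_eq_single j
    (fun i _ hij => by rw [smul_mul_assoc, hOrth i j hij, smul_zero]) (by simp),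
    smul_mul_assoc, hIdem]

theorem mul_mul_eq_zero_of_commute_sum_smul (hIdem : ∀ i, P i * P i = P i)
    (hOrth : ∀ i j, i ≠ j → P i * P j = 0) {E : ι → R} (hE : Function.Injective E) {M : A}
    (hM : Commute M (∑ i, E i • P i)) {i j : ι} (hij : i ≠ j) : P i * M * P j = 0 := by
  have h : E i • (P i * M * P j) = E j • (P i * M * P j) := by
    calc E i • (P i * M * P j) = P i * (∑ l, E l • P l) * M * P j := by
          rw [mul_sum_smul_of_orthogonal hIdem hOrth, smul_mul_assoc, smul_mul_assoc]
      _ = P i * M * ((∑ l, E l • P l) * P j) := by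
          simp only [mul_assoc]; rw [← mul_assoc _ M, ← hM.eq, mul_assoc]
      _ = E j • (P i * M * P j) := by
          rw [sum_smul_mul_of_orthogonal hIdem hOrth, mul_smul_comm]
  rw [← sub_eq_zero, ← sub_smul] at h
  exact (smul_eq_zero.mp h).resolve_left (sub_ne_zero.mpr (hE.ne hij))

theorem commute_of_commute_sum_smul (hIdem : ∀ i, P i * P i = P i)
    (hOrth : ∀ i j, i ≠ j → P i * P j = 0) (hSum : ∑ i, P i = 1) {E : ι → R}
    (hE : Function.Injective E) {M : A} (hM : Commute M (∑ i, E i • P i)) (i : ι) :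
    Commute M (P i) := by
  have hoff : ∀ {j l}, j ≠ l → P j * M * P l = 0 :=
    mul_mul_eq_zero_of_commute_sum_smul hIdem hOrth hE hM
  calc M * P i = (∑ j, P j) * M * P i := by rw [hSum, one_mul]
    _ = P i * M * P i := by
        rw [Finset.sum_mul, Finset.sum_mul,
          Finset.sum_eq_single i (fun j _ hji => hoff hji) (by simp)]
    _ = P i * M * ∑ j, P j := by
        rw [Finset.mul_sum, Finset.sum_eq_single i (fun j _ hji => hoff hji.symm) (by simp)]
    _ = P i * M := by rw [hSum, mul_one]

end SpectralProjections

section KrausDecomposition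

variable {A ι κ : Type*} [Ring A] [StarRing A] [Fintype ι] [Fintype κ]

theorem sum_mul_mul_star_eq_sum_sum {P : ι → A} (hSelf : ∀ i, IsSelfAdjoint (P i))
    (hIdem : ∀ i, P i * P i = P i) (hSum : ∑ i, P i = 1) {M : κ → A}
    (hMP : ∀ k i, Commute (M k) (P i)) (ρ : A) :
    ∑ k, M k * ρ * star (M k) =
      ∑ i, ∑ j, P i * (∑ k, M k * (P i * ρ * P j) * star (M k)) * P j := by
  have hMP' : ∀ k j, Commute (star (M k)) (P j) := fun k j => by
    simpa only [(hSelf j).star_eq] using (hMP k j).star_star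
  have hterm : ∀ k i j, P i * (M k * (P i * ρ * P j) * star (M k)) * P j =
      M k * (P i * ρ * P j) * star (M k) := fun k i j => by
    calc P i * (M k * (P i * ρ * P j) * star (M k)) * P j
        = M k * ((P i * P i) * ρ * (P j * P j)) * star (M k) := by
          simp only [mul_assoc, (hMP k i).left_comm, (hMP' k j).eq]
      _ = _ := by rw [hIdem, hIdem]
  calc ∑ k, M k * ρ * star (M k) = ∑ k, M k * ((∑ i, P i) * ρ * ∑ j, P j) * star (M k) := by
        rw [hSum, one_mul, mul_one]
    _ = ∑ i, ∑ j, ∑ k, M k * (P i * ρ * P j) * star (M k) := by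
        simp only [Finset.sum_mul, Finset.mul_sum]
        rw [Finset.sum_comm_cycle]
        exact Finset.sum_congr rfl fun _ _ => Finset.sum_comm
    _ = _ := by simp only [hterm, Finset.mul_sum, Finset.sum_mul]

end KrausDecomposition

section KrausBounds

variable {𝕜 E κ : Type*} [RCLike 𝕜] [NormedAddCommGroup E] [InnerProductSpace 𝕜 E]
  [CompleteSpace E] [Fintype κ] {M : κ → E →L[𝕜] E}

theorem sum_norm_apply_sq_eq (hM : ∑ k, star (M k) * M k = 1) (y : E) :
    ∑ k, ‖M k y‖ ^ 2 = ‖y‖ ^ 2 := by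
  have h : ∑ k, ⟪y, (star (M k) * M k) y⟫_𝕜 = ⟪y, y⟫_𝕜 := by
    rw [← inner_sum, ← _root_.sum_apply, hM, one_apply_eq_self]
  simp only [ContinuousLinearMap.star_eq_adjoint, mul_apply_eq_comp,
    ContinuousLinearMap.adjoint_inner_right] at h
  apply_fun RCLike.re at h
  simpa only [map_sum, ← norm_sq_eq_re_inner] using h

theorem sum_norm_apply_mul_norm_apply_le (hM : ∑ k, star (M k) * M k = 1) (y w : E) :
    ∑ k, ‖M k y‖ * ‖M k w‖ ≤ ‖y‖ * ‖w‖ := by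
  simpa only [sum_norm_apply_sq_eq hM, Real.sqrt_sq (norm_nonneg _)] using
    Real.sum_mul_le_sqrt_mul_sqrt Finset.univ (fun k => ‖M k y‖) (fun k => ‖M k w‖)

theorem norm_sum_inner_mul_mul_star_le {ι : Type*} [Fintype ι]
    (hM : ∑ k, star (M k) * M k = 1) (X : E →L[𝕜] E) (b : OrthonormalBasis ι 𝕜 E) (u v : E) :
    ‖∑ k, ⟪u, (M k * X * star (M k)) v⟫_𝕜‖ ≤ ‖u‖ * ‖v‖ * ∑ i, ‖X (b i)‖ := by
  have hexpand : ∀ k, ⟪u, (M k * X * star (M k)) v⟫_𝕜 =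
      ∑ i, ⟪M k (b i), v⟫_𝕜 * ⟪u, M k (X (b i))⟫_𝕜 := fun k => by
    conv_lhs => rw [mul_apply_eq_comp, mul_apply_eq_comp, ← b.sum_repr' (star (M k) v)]
    simp only [map_sum, map_smul, inner_sum, inner_smul_right, ContinuousLinearMap.star_eq_adjoint,
      ContinuousLinearMap.adjoint_inner_right]
  calc ‖∑ k, ⟪u, (M k * X * star (M k)) v⟫_𝕜‖
      ≤ ∑ k, ∑ i, ‖⟪M k (b i), v⟫_𝕜‖ * ‖⟪u, M k (X (b i))⟫_𝕜‖ := by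
        refine (norm_sum_le _ _).trans (Finset.sum_le_sum fun k _ => ?_)
        rw [hexpand]
        exact (norm_sum_le _ _).trans_eq (by simp only [norm_mul])
    _ ≤ ∑ k, ∑ i, ‖u‖ * ‖v‖ * (‖M k (b i)‖ * ‖M k (X (b i))‖) := by
        refine Finset.sum_le_sum fun k _ => Finset.sum_le_sum fun i _ => ?_
        calc ‖⟪M k (b i), v⟫_𝕜‖ * ‖⟪u, M k (X (b i))⟫_𝕜‖
            ≤ (‖M k (b i)‖ * ‖v‖) * (‖u‖ * ‖M k (X (b i))‖) := by
              gcongr <;> exact norm_inner_le_norm _ _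
          _ = _ := by ring
    _ = ‖u‖ * ‖v‖ * ∑ i, ∑ k, ‖M k (b i)‖ * ‖M k (X (b i))‖ := by
        rw [Finset.sum_comm, Finset.mul_sum]
        simp only [Finset.mul_sum]
    _ ≤ ‖u‖ * ‖v‖ * ∑ i, ‖X (b i)‖ := by
        gcongr with i
        simpa only [b.orthonormal.1 i, one_mul] using
          sum_norm_apply_mul_norm_apply_le hM (b i) (X (b i))

end KrausBounds

section MatrixBounds

variable {d : ℕ}

theorem EuclideanSpace.norm_sq_eq_re_star_dotProduct {n : Type*} [Fintype n]
    (x : EuclideanSpace ℂ n) :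
    ‖x‖ ^ 2 = (star (WithLp.ofLp x) ⬝ᵥ WithLp.ofLp x).re := by
  rw [@norm_sq_eq_re_inner ℂ, EuclideanSpace.inner_eq_star_dotProduct, dotProduct_comm]
  rfl

theorem wt_eq_norm_sq (P : Matrix (Fin d) (Fin d) ℂ) (v : Fin d → ℂ) :
    wt P v = ‖WithLp.toLp 2 (P *ᵥ v)‖ ^ 2 := by
  rw [wt, EuclideanSpace.norm_sq_eq_re_star_dotProduct]

theorem star_dotProduct_mul_mul_mulVec {m n : Type*} [Fintype m] [Fintype n]
    (A : Matrix m m ℂ) (Y : Matrix m n ℂ) (B : Matrix n n ℂ) (u : m → ℂ) (v : n → ℂ) :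
    star u ⬝ᵥ ((A * Y * B) *ᵥ v) = star (Aᴴ *ᵥ u) ⬝ᵥ (Y *ᵥ (B *ᵥ v)) := by
  rw [star_mulVec, conjTranspose_conjTranspose, ← dotProduct_mulVec, mulVec_mulVec, mulVec_mulVec]

theorem star_dotProduct_mulVec_eq_inner {n : Type*} [Fintype n] [DecidableEq n]
    (A : Matrix n n ℂ) (u v : n → ℂ) :
    star u ⬝ᵥ (A *ᵥ v) =
      ⟪WithLp.toLp 2 u, toEuclideanCLM (n := n) (𝕜 := ℂ) A (WithLp.toLp 2 v)⟫_ℂ := by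
  rw [toEuclideanCLM_toLp, EuclideanSpace.inner_toLp_toLp, dotProduct_comm]

theorem traceNorm_eq_sum_norm (X : Matrix (Fin d) (Fin d) ℂ) :
    traceNorm X = ∑ i, ‖toEuclideanCLM (n := Fin d) (𝕜 := ℂ) X
      ((posSemidef_conjTranspose_mul_self X).1.eigenvectorBasis i)‖ := by
  set hT := (posSemidef_conjTranspose_mul_self X).1
  have hU : star (hT.eigenvectorUnitary : Matrix (Fin d) (Fin d) ℂ) * hT.eigenvectorUnitary = 1 :=
    Unitary.coe_star_mul_self _
  have heig : ∀ i, hT.eigenvalues i =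
      ‖toEuclideanCLM (n := Fin d) (𝕜 := ℂ) X (hT.eigenvectorBasis i)‖ ^ 2 := fun i => by
    rw [hT.eigenvalues_eq, EuclideanSpace.norm_sq_eq_re_star_dotProduct, ofLp_toEuclideanCLM,
      star_mulVec, ← dotProduct_mulVec, mulVec_mulVec]
    rfl
  rw [traceNorm, trace_mul_cycle, hU, one_mul, trace_diagonal, Complex.re_sum]
  simp only [Function.comp_apply, heig, Real.sqrt_sq (norm_nonneg _)]
  rfl

theorem norm_star_dotProduct_kraus_mulVec_le {K : ℕ} {M : Fin K → Matrix (Fin d) (Fin d) ℂ}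
    (hTP : ∑ k, (M k)ᴴ * M k = 1) (X : Matrix (Fin d) (Fin d) ℂ) (u v : Fin d → ℂ) :
    ‖star u ⬝ᵥ ((∑ k, M k * X * (M k)ᴴ) *ᵥ v)‖ ≤
      ‖WithLp.toLp 2 u‖ * ‖WithLp.toLp 2 v‖ * traceNorm X := by
  have hTP' : ∑ k, star (toEuclideanCLM (n := Fin d) (𝕜 := ℂ) (M k)) *
      toEuclideanCLM (n := Fin d) (𝕜 := ℂ) (M k) = 1 := by
    rw [← map_one (toEuclideanCLM (n := Fin d) (𝕜 := ℂ)), ← hTP]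
    simp only [map_sum, map_mul, ← star_eq_conjTranspose, map_star]
  rw [traceNorm_eq_sum_norm, star_dotProduct_mulVec_eq_inner, map_sum, _root_.sum_apply,
    inner_sum]
  simp only [map_mul, ← star_eq_conjTranspose, map_star]
  exact norm_sum_inner_mul_mul_star_le hTP' _ _ _ _

end MatrixBounds

theorem stmt_14_general {d K : ℕ} {ι : Type} [Fintype ι]
    (H : Matrix (Fin d) (Fin d) ℂ)
    (E : ι → ℝ) (hE : Function.Injective E)
    (P : ι → Matrix (Fin d) (Fin d) ℂ)
    (hHerm : ∀ i, (P i).IsHermitian)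
    (hIdem : ∀ i, P i * P i = P i)
    (hOrth : ∀ i j, i ≠ j → P i * P j = 0)
    (hSum : ∑ i, P i = 1)
    (hSpec : H = ∑ i, (E i : ℂ) • P i)
    (ρ : Matrix (Fin d) (Fin d) ℂ) (hρ : ρ.PosSemidef)
    (ψ : Fin d → ℂ)
    (M : Fin K → Matrix (Fin d) (Fin d) ℂ)
    (hTP : ∑ k, (M k)ᴴ * M k = 1)
    (hComm : ∀ k, M k * H = H * M k) :
    star ψ ⬝ᵥ ((∑ k, M k * ρ * (M k)ᴴ) *ᵥ ψ) ≤
      ((∑ i, ∑ j, Real.sqrt (wt (P i) ψ * wt (P j) ψ) * traceNorm (P i * ρ * P j) : ℝ) : ℂ) := by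
  have hMP : ∀ k i, Commute (M k) (P i) := fun k =>
    commute_of_commute_sum_smul hIdem hOrth hSum (Complex.ofReal_injective.comp hE)
      (hSpec ▸ hComm k)
  have hdecomp := sum_mul_mul_star_eq_sum_sum hHerm hIdem hSum hMP ρ
  simp only [star_eq_conjTranspose] at hdecomp
  have hnonneg : 0 ≤ star ψ ⬝ᵥ ((∑ k, M k * ρ * (M k)ᴴ) *ᵥ ψ) :=
    (posSemidef_sum _ fun k _ => hρ.mul_mul_conjTranspose_same (M k)).dotProduct_mulVec_nonneg ψ
  rw [Complex.eq_coe_norm_of_nonneg hnonneg, Complex.real_le_real, hdecomp]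
  calc ‖star ψ ⬝ᵥ ((∑ i, ∑ j, P i * (∑ k, M k * (P i * ρ * P j) * (M k)ᴴ) * P j) *ᵥ ψ)‖
      = ‖∑ i, ∑ j, star (P i *ᵥ ψ) ⬝ᵥ
          ((∑ k, M k * (P i * ρ * P j) * (M k)ᴴ) *ᵥ (P j *ᵥ ψ))‖ := by
        simp only [sum_mulVec, dotProduct_sum, star_dotProduct_mul_mul_mulVec, (hHerm _).eq]
    _ ≤ ∑ i, ∑ j, ‖star (P i *ᵥ ψ) ⬝ᵥ
          ((∑ k, M k * (P i * ρ * P j) * (M k)ᴴ) *ᵥ (P j *ᵥ ψ))‖ :=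
        (norm_sum_le _ _).trans (Finset.sum_le_sum fun i _ => norm_sum_le _ _)
    _ ≤ _ := Finset.sum_le_sum fun i _ => Finset.sum_le_sum fun j _ => by
        rw [wt_eq_norm_sq, wt_eq_norm_sq, ← mul_pow, Real.sqrt_sq (by positivity)]
        exact norm_star_dotProduct_kraus_mulVec_le hTP _ _ _

/-- **Deterministic fidelity bound for mixed-to-pure transitions.** Let `H` be Hermitian with
spectral projections `P i`, `ρ` a density matrix, `ψ` a unit vector with `q_E = ‖P_E ψ‖²`, and
`ρ_{E,E'} = P_E ρ P_{E'}`. Every quantum channel whose Kraus operators commute with `H`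
satisfies `⟨ψ|ℳ(ρ)|ψ⟩ ≤ ∑_{E,E'} √(q_E q_{E'}) ‖ρ_{E,E'}‖₁`. -/
theorem stmt_14 {d K : ℕ} {ι : Type} [Fintype ι] [DecidableEq ι]
    (H : Matrix (Fin d) (Fin d) ℂ) (hH : H.IsHermitian)
    (E : ι → ℝ) (hE : Function.Injective E)
    (P : ι → Matrix (Fin d) (Fin d) ℂ)
    (hHerm : ∀ i, (P i).IsHermitian)
    (hIdem : ∀ i, P i * P i = P i)
    (hOrth : ∀ i j, i ≠ j → P i * P j = 0)
    (hSum : ∑ i, P i = 1)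
    (hSpec : H = ∑ i, (E i : ℂ) • P i)
    (ρ : Matrix (Fin d) (Fin d) ℂ) (hρ : ρ.PosSemidef) (hρ1 : ρ.trace = 1)
    (ψ : Fin d → ℂ) (hψ : star ψ ⬝ᵥ ψ = 1)
    (M : Fin K → Matrix (Fin d) (Fin d) ℂ)
    (hTP : ∑ k, (M k)ᴴ * M k = 1)
    (hComm : ∀ k, M k * H = H * M k) :
    star ψ ⬝ᵥ ((∑ k, M k * ρ * (M k)ᴴ) *ᵥ ψ) ≤
      ((∑ i, ∑ j, Real.sqrt (wt (P i) ψ * wt (P j) ψ) * traceNorm (P i * ρ * P j) : ℝ) : ℂ) :=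
  stmt_14_general H E hE P hHerm hIdem hOrth hSum hSpec ρ hρ ψ M hTP hComm
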